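/- Fix s > 0 and set c₆ = 1/3 + (2/3)·√(s + 1/4) + 0.001, and assume c₆ < 1. Then there exists a constant C > 0 such that for every integer N ≥ 1, ∑_{n ≥ N} (2/3)^n · ∑_{r=1}^{⌊n/2⌋} C(n−r−1, r−1) · s^r ≤ C · N · c₆^N. -/

import Mathlib

/-!
Write `s = x (1 + x)` with `x = √(s + 1/4) - 1/2 ≥ 0`. The binomial theorem gives
`C(m, k) xᵏ ≤ (1 + x)ᵐ`, so every term `C(n-r-1, r-1) sʳ = s · C(n-r-1, r-1) x^(r-1) (1+x)^(r-1)`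
is at most `s (1 + x)ⁿ`. Hence the `n`-th path weight is at most `s n bⁿ` with
`b = (2/3)(1 + x) = 1/3 + (2/3)√(s + 1/4) < 1`, and since `N + k ≤ N (k + 1)` the tail of
`∑ n bⁿ` from `N` is at most `N bᴺ ∑ (k + 1) bᵏ = N bᴺ / (1 - b)²`.
-/

/-- The total entropy–energy weight of dual lattice paths with `n` edges:
`(2/3)^n ∑_{r=1}^{⌊n/2⌋} C(n−r−1, r−1) s^r`. -/
noncomputable def pathWeight (s : ℝ) (n : ℕ) : ℝ :=
  (2 / 3 : ℝ) ^ n * ∑ r ∈ Finset.Icc 1 (n / 2), (Nat.choose (n - r - 1) (r - 1) : ℝ) * s ^ r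

open Finset

lemma choose_mul_pow_le_one_add_pow {R : Type*} [CommSemiring R] [PartialOrder R]
    [IsOrderedRing R] {x : R} (hx : 0 ≤ x) (m k : ℕ) :
    (m.choose k : R) * x ^ k ≤ (1 + x) ^ m := by
  rcases le_or_gt k m with hkm | hmk
  · rw [add_comm, add_pow]
    calc (m.choose k : R) * x ^ k = x ^ k * 1 ^ (m - k) * m.choose k := by ring
      _ ≤ ∑ i ∈ range (m + 1), x ^ i * 1 ^ (m - i) * m.choose i :=
        single_le_sum (f := fun i ↦ x ^ i * 1 ^ (m - i) * (m.choose i : R))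
          (fun i _ ↦ mul_nonneg (mul_nonneg (pow_nonneg hx i) (by simp)) (Nat.cast_nonneg _))
          (mem_range.mpr (by omega))
  · rw [Nat.choose_eq_zero_of_lt hmk, Nat.cast_zero, zero_mul]
    exact pow_nonneg (add_nonneg zero_le_one hx) m

lemma pathWeight_summand_le {x : ℝ} (hx : 0 ≤ x) {n r : ℕ} (hr : 1 ≤ r) (hrn : r ≤ n) :
    ((n - r - 1).choose (r - 1) : ℝ) * (x * (1 + x)) ^ r ≤ x * (1 + x) * (1 + x) ^ n := by
  have hpow : (x * (1 + x)) ^ r = x * (1 + x) * (x ^ (r - 1) * (1 + x) ^ (r - 1)) := by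
    rw [← mul_pow, ← pow_succ', Nat.sub_add_cancel hr]
  have hbinom := choose_mul_pow_le_one_add_pow hx (n - r - 1) (r - 1)
  calc ((n - r - 1).choose (r - 1) : ℝ) * (x * (1 + x)) ^ r
      = x * (1 + x) * (((n - r - 1).choose (r - 1) : ℝ) * x ^ (r - 1) * (1 + x) ^ (r - 1)) := by
        rw [hpow]; ring
    _ ≤ x * (1 + x) * ((1 + x) ^ (n - r - 1) * (1 + x) ^ (r - 1)) := by gcongr
    _ ≤ x * (1 + x) * (1 + x) ^ n := by
        rw [← pow_add]
        gcongr
        · linarith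
        · omega

lemma pathWeight_mul_one_add_le {x : ℝ} (hx : 0 ≤ x) (n : ℕ) :
    pathWeight (x * (1 + x)) n ≤ x * (1 + x) * n * (2 / 3 * (1 + x)) ^ n := by
  have hsum : ∑ r ∈ Icc 1 (n / 2), ((n - r - 1).choose (r - 1) : ℝ) * (x * (1 + x)) ^ r
      ≤ (n / 2 : ℕ) * (x * (1 + x) * (1 + x) ^ n) := by
    simpa [nsmul_eq_mul] using sum_le_card_nsmul _ _ _ fun r hr ↦
      pathWeight_summand_le hx (mem_Icc.mp hr).1
        (by have := (mem_Icc.mp hr).2; omega)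
  have hcard : ((n / 2 : ℕ) : ℝ) ≤ n := by exact_mod_cast Nat.div_le_self n 2
  calc pathWeight (x * (1 + x)) n ≤ (2 / 3) ^ n * ((n / 2 : ℕ) * (x * (1 + x) * (1 + x) ^ n)) :=
        mul_le_mul_of_nonneg_left hsum (by positivity)
    _ ≤ (2 / 3) ^ n * (n * (x * (1 + x) * (1 + x) ^ n)) := by gcongr
    _ = x * (1 + x) * n * (2 / 3 * (1 + x)) ^ n := by rw [mul_pow]; ring

lemma pathWeight_le {s : ℝ} (hs : 0 ≤ s) (n : ℕ) :
    pathWeight s n ≤ s * n * (1 / 3 + 2 / 3 * √(s + 1 / 4)) ^ n := by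
  set x := √(s + 1 / 4) - 1 / 2
  have hx : 0 ≤ x :=
    sub_nonneg.mpr <| (Real.le_sqrt' one_half_pos).mpr (by linarith)
  have hs_eq : s = x * (1 + x) := by
    have := Real.sq_sqrt (show (0 : ℝ) ≤ s + 1 / 4 by linarith)
    simp only [x]; nlinarith
  have hb : 1 / 3 + 2 / 3 * √(s + 1 / 4) = 2 / 3 * (1 + x) := by simp only [x]; ring
  rw [hb, hs_eq]
  exact pathWeight_mul_one_add_le hx n

lemma tsum_tail_le_of_le_mul_geometric {f : ℕ → ℝ} {A b : ℝ} (hf₀ : ∀ n, 0 ≤ f n) (hA : 0 ≤ A)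
    (hb₀ : 0 ≤ b) (hb₁ : b < 1) (hf : ∀ n, f n ≤ A * n * b ^ n) {N : ℕ} (hN : 1 ≤ N) :
    ∑' k, f (N + k) ≤ A / (1 - b) ^ 2 * N * b ^ N := by
  have hgeom : HasSum (fun k : ℕ ↦ A * N * b ^ N * ((k + 1) * b ^ k))
      (A * N * b ^ N * (1 / (1 - b) ^ 2)) := by
    have := hasSum_choose_mul_geometric_of_norm_lt_one 1
      (show ‖b‖ < 1 by rwa [Real.norm_of_nonneg hb₀])
    simpa using this.mul_left (A * N * b ^ N)
  have hterm (k : ℕ) : f (N + k) ≤ A * N * b ^ N * ((k + 1) * b ^ k) := by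
    have hNk : ((N + k : ℕ) : ℝ) ≤ N * (k + 1) := by
      have : (1 : ℝ) ≤ N := by exact_mod_cast hN
      push_cast; nlinarith
    calc f (N + k) ≤ A * (N + k : ℕ) * b ^ (N + k) := hf _
      _ ≤ A * (N * (k + 1)) * b ^ (N + k) := by gcongr
      _ = A * N * b ^ N * ((k + 1) * b ^ k) := by rw [pow_add]; ring
  have hsummable : Summable fun k ↦ f (N + k) :=
    hgeom.summable.of_nonneg_of_le (fun k ↦ hf₀ _) hterm
  calc ∑' k, f (N + k) ≤ A * N * b ^ N * (1 / (1 - b) ^ 2) :=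
        hasSum_le hterm hsummable.hasSum hgeom
    _ = A / (1 - b) ^ 2 * N * b ^ N := by ring

/-- Exponential tail bound: `∑_{n ≥ N} (2/3)^n ∑_{r=1}^{⌊n/2⌋} C(n−r−1,r−1) s^r ≤ C N c₆^N`. -/
theorem stmt_10 (s : ℝ) (hs : 0 < s)
    (hc₆ : 1 / 3 + 2 / 3 * Real.sqrt (s + 1 / 4) + 0.001 < 1) :
    ∃ C : ℝ, 0 < C ∧ ∀ N : ℕ, 1 ≤ N →
      (∑' k : ℕ, pathWeight s (N + k)) ≤
        C * N * (1 / 3 + 2 / 3 * Real.sqrt (s + 1 / 4) + 0.001) ^ N := by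
  set b := 1 / 3 + 2 / 3 * √(s + 1 / 4)
  have hb₀ : 0 ≤ b := by positivity
  have hb₁ : b < 1 := by linarith
  have hweight_nonneg (n : ℕ) : 0 ≤ pathWeight s n :=
    mul_nonneg (by positivity) (sum_nonneg fun r _ ↦ by positivity)
  refine ⟨s / (1 - b) ^ 2, div_pos hs (by nlinarith), fun N hN ↦ ?_⟩
  calc ∑' k, pathWeight s (N + k) ≤ s / (1 - b) ^ 2 * N * b ^ N :=
        tsum_tail_le_of_le_mul_geometric hweight_nonneg hs.le hb₀ hb₁ (pathWeight_le hs.le) hN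
    _ ≤ s / (1 - b) ^ 2 * N * (b + 0.001) ^ N := by gcongr; norm_num
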